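/- Fix i ∈ I and suppose G(λ) < ∞. Then the stationary probability that class i is idle satisfies ψ_i = (1 − ρ_i) · ( ∑_{k∈K} μ_k / ψ_{|−k,i} ) / ( ∑_{k∈K} μ_k / ψ_{|−k} ), where ψ_i = ψ · ∑_{x : x_i = 0} Φ(x) λ^x, ρ_i = λ_i / ( M(K) − Λ(I ∖ {i}) ), and ψ_{|−k,i} = 1/G(λ') with λ' agreeing with λ except that λ'_j = 0 for all j ∈ I_k ∪ {i}. (In particular M(K) − Λ(I∖{i}) > 0, so ρ_i is well defined.) -/

import Mathlib

open scoped BigOperators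

/-- The balance function of balanced fairness: `Φ(0) = 1` and
`Φ(x) = (∑_{i : x_i > 0} Φ(x - e_i)) / M(⋃_{i : x_i > 0} 𝒦_i)`. -/
noncomputable def Phi {I K : Type} [Fintype I] [DecidableEq I] [DecidableEq K]
    (μ : K → ℝ) (Ka : I → Finset K) (x : I → ℕ) : ℝ :=
  if x = fun _ => 0 then 1
  else (∑ i ∈ (Finset.univ.filter (fun i => 0 < x i)).attach,
      Phi μ Ka (Function.update x i.1 (x i.1 - 1))) /
    (∑ k ∈ (Finset.univ.filter (fun i => 0 < x i)).biUnion Ka, μ k)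
termination_by ∑ i, x i
decreasing_by
  have hi := i.2
  simp only [Finset.mem_filter] at hi
  apply Finset.sum_lt_sum
  · intro j _
    rcases eq_or_ne j i.1 with rfl | h
    · simp [Function.update_self]
    · rw [Function.update_of_ne h]
  · exact ⟨i.1, Finset.mem_univ i.1, by simp [Function.update_self]; omega⟩

/-- The normalization series `G(λ) = ∑_{x∈ℕ^I} Φ(x) λ^x` (as a real tsum). -/
noncomputable def Gf {I K : Type} [Fintype I] [DecidableEq I] [DecidableEq K]
    (μ : K → ℝ) (Ka : I → Finset K) (lam : I → ℝ) : ℝ :=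
  ∑' x : I → ℕ, Phi μ Ka x * ∏ i, lam i ^ x i

/-- Arrival rates of the system with all traffic of classes assigned to server `k` removed. -/
def lamMinus {I K : Type} [DecidableEq K] (Ka : I → Finset K) (lam : I → ℝ) (k : K) :
    I → ℝ :=
  fun i => if k ∈ Ka i then 0 else lam i

/-- Arrival rates with the traffic of class `i` and of all classes assigned to server `k`
removed. -/
def lamMinusKI {I K : Type} [DecidableEq I] [DecidableEq K]
    (Ka : I → Finset K) (lam : I → ℝ) (k : K) (i : I) : I → ℝ :=
  fun j => if k ∈ Ka j ∨ j = i then 0 else lam j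

/-! The balance equations `Φ(x) M(𝒦(x)) = ∑_{j : x_j > 0} Φ(x - e_j)`, weighted by `λ^x` and summed
over all states (shifting `x ↦ x + e_j` in the `j`-th term), give
`Λ(I) G(λ) = ∑_x M(𝒦(x)) Φ(x) λ^x`. The same series equals `M(K) G(λ) - ∑_k μ_k G(λ_{|-k})`,
because `G(λ_{|-k})` keeps exactly the states in which server `k` is idle. Hence
`(M(K) - Λ(I)) G(λ) = ∑_k μ_k G(λ_{|-k})`, which is positive. Setting `λ_i = 0` turns `G` into
the sum over the states with `x_i = 0`, and dividing the two instances of this identity gives the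
formula. -/

lemma prod_pow_update_succ {I : Type} [Fintype I] [DecidableEq I] (lam : I → ℝ) (x : I → ℕ)
    (j : I) : ∏ t, lam t ^ Function.update x j (x j + 1) t = lam j * ∏ t, lam t ^ x t := by
  rw [← Finset.mul_prod_erase _ _ (Finset.mem_univ j),
    ← Finset.mul_prod_erase _ _ (Finset.mem_univ j), Function.update_self, pow_succ,
    mul_comm _ (lam j), mul_assoc]
  congr 2
  exact Finset.prod_congr rfl fun t ht => by rw [Function.update_of_ne (Finset.ne_of_mem_erase ht)]

section BalancedFairness

variable {I K : Type} [DecidableEq K] (μ : K → ℝ) (Ka : I → Finset K)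

lemma lamMinus_nonneg {lam : I → ℝ} (hlam : ∀ j, 0 ≤ lam j) (k : K) (j : I) :
    0 ≤ lamMinus Ka lam k j := by
  unfold lamMinus
  split_ifs
  exacts [le_rfl, hlam j]

lemma lamMinus_le {lam : I → ℝ} (hlam : ∀ j, 0 ≤ lam j) (k : K) (j : I) :
    lamMinus Ka lam k j ≤ lam j := by
  unfold lamMinus
  split_ifs
  exacts [hlam j, le_rfl]

lemma lamMinus_update_zero [DecidableEq I] (lam : I → ℝ) (i : I) (k : K) :
    lamMinus Ka (Function.update lam i 0) k = lamMinusKI Ka lam k i := by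
  funext j
  rcases eq_or_ne j i with rfl | hj
  · simp [lamMinus, lamMinusKI]
  · simp [lamMinus, lamMinusKI, hj]

variable [Fintype I]

/-- `𝒦(x) = ⋃_{i : x_i > 0} 𝒦_i`; under balanced fairness these servers are all busy in state
`x`. -/
def busyServers (x : I → ℕ) : Finset K :=
  (Finset.univ.filter fun i => 0 < x i).biUnion Ka

lemma sum_busyServers_pos (hμ : ∀ k, 0 < μ k) (hKa : ∀ i, (Ka i).Nonempty) {x : I → ℕ}
    (hx : x ≠ fun _ => 0) : 0 < ∑ k ∈ busyServers Ka x, μ k := by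
  obtain ⟨i, hi⟩ := Function.ne_iff.1 hx
  obtain ⟨k, hk⟩ := hKa i
  exact Finset.sum_pos (fun k _ => hμ k) ⟨k, Finset.mem_biUnion.2
    ⟨i, Finset.mem_filter.2 ⟨Finset.mem_univ i, Nat.pos_of_ne_zero hi⟩, hk⟩⟩

lemma prod_lamMinus_pow (lam : I → ℝ) (k : K) (x : I → ℕ) :
    ∏ j, lamMinus Ka lam k j ^ x j = if k ∈ busyServers Ka x then 0 else ∏ j, lam j ^ x j := by
  split_ifs with hk
  · obtain ⟨j, hj, hkj⟩ := Finset.mem_biUnion.1 hk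
    refine Finset.prod_eq_zero (Finset.mem_univ j) ?_
    rw [lamMinus, if_pos hkj, zero_pow (Finset.mem_filter.1 hj).2.ne']
  · refine Finset.prod_congr rfl fun j _ => ?_
    unfold lamMinus
    split_ifs with hkj
    · have hxj : x j = 0 := by
        by_contra hxj
        exact hk (Finset.mem_biUnion.2
          ⟨j, Finset.mem_filter.2 ⟨Finset.mem_univ j, Nat.pos_of_ne_zero hxj⟩, hkj⟩)
      rw [hxj, pow_zero, pow_zero]
    · rfl

variable [DecidableEq I]

lemma Phi_zero : Phi μ Ka (fun _ => 0) = 1 := by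
  rw [Phi, if_pos rfl]

lemma Phi_nonneg (hμ : ∀ k, 0 ≤ μ k) (x : I → ℕ) : 0 ≤ Phi μ Ka x := by
  induction x using Phi.induct with
  | case1 => rw [Phi_zero]; exact zero_le_one
  | case2 x hx ih =>
    rw [Phi, if_neg hx]
    exact div_nonneg (Finset.sum_nonneg fun j _ => ih j) (Finset.sum_nonneg fun k _ => hμ k)

lemma Phi_mul_sum_busyServers (hμ : ∀ k, 0 < μ k) (hKa : ∀ i, (Ka i).Nonempty) (x : I → ℕ) :
    Phi μ Ka x * ∑ k ∈ busyServers Ka x, μ k =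
      ∑ j ∈ Finset.univ.filter (fun i => 0 < x i), Phi μ Ka (Function.update x j (x j - 1)) := by
  by_cases hx : x = fun _ => 0
  · subst hx
    simp [busyServers]
  · rw [Phi, if_neg hx]
    exact (div_mul_cancel₀ _ (sum_busyServers_pos μ Ka hμ hKa hx).ne').trans
      (Finset.sum_attach _ fun j => Phi μ Ka (Function.update x j (x j - 1)))

lemma summable_of_le (hμ : ∀ k, 0 ≤ μ k) {lam lam' : I → ℝ} (h0 : ∀ j, 0 ≤ lam' j)
    (hle : ∀ j, lam' j ≤ lam j) (hs : Summable fun x : I → ℕ => Phi μ Ka x * ∏ j, lam j ^ x j) :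
    Summable fun x : I → ℕ => Phi μ Ka x * ∏ j, lam' j ^ x j :=
  hs.of_nonneg_of_le
    (fun x => mul_nonneg (Phi_nonneg μ Ka hμ x) (Finset.prod_nonneg fun j _ => pow_nonneg (h0 j) _))
    fun x => mul_le_mul_of_nonneg_left
      (Finset.prod_le_prod (fun j _ => pow_nonneg (h0 j) _) fun j _ =>
        pow_le_pow_left₀ (h0 j) (hle j) _)
      (Phi_nonneg μ Ka hμ x)

lemma one_le_Gf (hμ : ∀ k, 0 ≤ μ k) {lam : I → ℝ} (hlam : ∀ j, 0 ≤ lam j)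
    (hs : Summable fun x : I → ℕ => Phi μ Ka x * ∏ j, lam j ^ x j) : 1 ≤ Gf μ Ka lam :=
  calc 1 = Phi μ Ka (fun _ => 0) * ∏ j, lam j ^ (fun _ : I => 0) j := by simp [Phi_zero]
    _ ≤ Gf μ Ka lam := hs.le_tsum _ fun x _ =>
      mul_nonneg (Phi_nonneg μ Ka hμ x) (Finset.prod_nonneg fun j _ => pow_nonneg (hlam j) _)

lemma hasSum_lam_mul_Gf {lam : I → ℝ} (j : I)
    (hs : Summable fun x : I → ℕ => Phi μ Ka x * ∏ j, lam j ^ x j) :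
    HasSum (fun y : I → ℕ =>
        if 0 < y j then Phi μ Ka (Function.update y j (y j - 1)) * ∏ t, lam t ^ y t else 0)
      (lam j * Gf μ Ka lam) := by
  have hinj : Function.Injective fun x : I → ℕ => Function.update x j (x j + 1) :=
    Function.LeftInverse.injective (g := fun y => Function.update y j (y j - 1)) fun x => by simp
  rw [← hinj.hasSum_iff]
  · refine (hs.hasSum.mul_left (lam j)).congr_fun fun x => ?_
    simp only [Function.comp_apply, Function.update_self, Nat.succ_pos, if_true,
      Function.update_idem, Nat.add_sub_cancel, Function.update_eq_self, prod_pow_update_succ]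
    ring
  · intro y hy
    rw [if_neg]
    intro h
    exact hy ⟨Function.update y j (y j - 1), by simp [Nat.sub_add_cancel h]⟩

lemma hasSum_sum_busyServers_mul_of_arrivals (hμ : ∀ k, 0 < μ k) (hKa : ∀ i, (Ka i).Nonempty)
    {lam : I → ℝ} (hs : Summable fun x : I → ℕ => Phi μ Ka x * ∏ j, lam j ^ x j) :
    HasSum (fun x : I → ℕ => (∑ k ∈ busyServers Ka x, μ k) * (Phi μ Ka x * ∏ j, lam j ^ x j))
      ((∑ j, lam j) * Gf μ Ka lam) := by
  rw [Finset.sum_mul]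
  refine (hasSum_sum fun j _ => hasSum_lam_mul_Gf μ Ka j hs).congr_fun fun x => ?_
  rw [← Finset.sum_filter, ← Finset.sum_mul, ← Phi_mul_sum_busyServers μ Ka hμ hKa]
  ring

lemma hasSum_sum_busyServers_mul_of_servers [Fintype K] (hμ : ∀ k, 0 ≤ μ k) {lam : I → ℝ}
    (hlam : ∀ j, 0 ≤ lam j) (hs : Summable fun x : I → ℕ => Phi μ Ka x * ∏ j, lam j ^ x j) :
    HasSum (fun x : I → ℕ => (∑ k ∈ busyServers Ka x, μ k) * (Phi μ Ka x * ∏ j, lam j ^ x j))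
      (∑ k, μ k * (Gf μ Ka lam - Gf μ Ka (lamMinus Ka lam k))) := by
  have hk : ∀ k, HasSum (fun x : I → ℕ => μ k * (if k ∈ busyServers Ka x then
      Phi μ Ka x * ∏ j, lam j ^ x j else 0)) (μ k * (Gf μ Ka lam - Gf μ Ka (lamMinus Ka lam k))) :=
    fun k => (hs.hasSum.sub (summable_of_le μ Ka hμ (lamMinus_nonneg Ka hlam k)
      (lamMinus_le Ka hlam k) hs).hasSum).mul_left (μ k) |>.congr_fun fun x => by
        rw [prod_lamMinus_pow]
        split_ifs <;> ring
  refine (hasSum_sum fun k _ => hk k).congr_fun fun x => ?_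
  simp only [mul_ite, mul_zero, Finset.sum_ite_mem, Finset.univ_inter, Finset.sum_mul]

theorem sub_mul_Gf_eq_sum_mul_Gf_lamMinus [Fintype K] (hμ : ∀ k, 0 < μ k)
    (hKa : ∀ i, (Ka i).Nonempty) {lam : I → ℝ} (hlam : ∀ j, 0 ≤ lam j)
    (hs : Summable fun x : I → ℕ => Phi μ Ka x * ∏ j, lam j ^ x j) :
    ((∑ k, μ k) - ∑ j, lam j) * Gf μ Ka lam = ∑ k, μ k * Gf μ Ka (lamMinus Ka lam k) := by
  have h := (hasSum_sum_busyServers_mul_of_arrivals μ Ka hμ hKa hs).unique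
    (hasSum_sum_busyServers_mul_of_servers μ Ka (fun k => (hμ k).le) hlam hs)
  simp only [mul_sub, Finset.sum_sub_distrib, ← Finset.sum_mul] at h
  linarith

lemma sum_mul_Gf_lamMinus_pos [Fintype K] [Nonempty K] (hμ : ∀ k, 0 < μ k) {lam : I → ℝ}
    (hlam : ∀ j, 0 ≤ lam j) (hs : Summable fun x : I → ℕ => Phi μ Ka x * ∏ j, lam j ^ x j) :
    0 < ∑ k, μ k * Gf μ Ka (lamMinus Ka lam k) :=
  Finset.sum_pos (fun k _ => mul_pos (hμ k) <| one_pos.trans_le <|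
      one_le_Gf μ Ka (fun k => (hμ k).le) (lamMinus_nonneg Ka hlam k)
        (summable_of_le μ Ka (fun k => (hμ k).le) (lamMinus_nonneg Ka hlam k)
          (lamMinus_le Ka hlam k) hs))
    Finset.univ_nonempty

lemma prod_update_zero_pow (lam : I → ℝ) (i : I) (x : I → ℕ) :
    ∏ j, Function.update lam i 0 j ^ x j = if x i = 0 then ∏ j, lam j ^ x j else 0 := by
  split_ifs with hx
  · refine Finset.prod_congr rfl fun j _ => ?_
    rcases eq_or_ne j i with rfl | hj
    · rw [hx, pow_zero, pow_zero]
    · rw [Function.update_of_ne hj]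
  · exact Finset.prod_eq_zero (Finset.mem_univ i) (by rw [Function.update_self, zero_pow hx])

lemma tsum_subtype_eq_Gf_update (lam : I → ℝ) (i : I) :
    ∑' x : {x : I → ℕ // x i = 0}, Phi μ Ka x.1 * ∏ j, lam j ^ x.1 j =
      Gf μ Ka (Function.update lam i 0) := by
  calc _ = ∑' x : {x : I → ℕ | x i = 0}, Phi μ Ka x.1 * ∏ j, Function.update lam i 0 j ^ x.1 j :=
        tsum_congr fun x => by rw [prod_update_zero_pow, if_pos (show x.1 i = 0 from x.2)]
    _ = Gf μ Ka (Function.update lam i 0) := by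
        refine tsum_subtype_eq_of_support_subset (f := fun x : I → ℕ =>
          Phi μ Ka x * ∏ j, Function.update lam i 0 j ^ x j) fun x hx => ?_
        by_contra hxi
        exact hx (by simp only [prod_update_zero_pow, if_neg (show ¬x i = 0 from hxi), mul_zero])

end BalancedFairness

theorem class_idle_probability_general
    {I K : Type} [Fintype I] [DecidableEq I]
    [Fintype K] [DecidableEq K] [Nonempty K]
    (μ : K → ℝ) (hμ : ∀ k, 0 < μ k)
    (Ka : I → Finset K) (hKa : ∀ i, (Ka i).Nonempty)
    (lam : I → ℝ) (hlam : ∀ i, 0 ≤ lam i) (i : I)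
    (hG : Summable (fun x : I → ℕ => Phi μ Ka x * ∏ j, lam j ^ x j)) :
    0 < (∑ k, μ k) - ∑ j ∈ Finset.univ.erase i, lam j ∧
    (Gf μ Ka lam)⁻¹ *
        (∑' x : {x : I → ℕ // x i = 0}, Phi μ Ka x.1 * ∏ j, lam j ^ x.1 j) =
      (1 - lam i / ((∑ k, μ k) - ∑ j ∈ Finset.univ.erase i, lam j)) *
        (∑ k, μ k / (Gf μ Ka (lamMinusKI Ka lam k i))⁻¹) /
        (∑ k, μ k / (Gf μ Ka (lamMinus Ka lam k))⁻¹) := by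
  have hlam' : ∀ j, 0 ≤ Function.update lam i 0 j :=
    le_update_iff.2 ⟨le_rfl, fun j _ => hlam j⟩
  have hle : ∀ j, Function.update lam i 0 j ≤ lam j := update_le_self_iff.2 (hlam i)
  have hall := sub_mul_Gf_eq_sum_mul_Gf_lamMinus μ Ka hμ hKa hlam hG
  have hidle := sub_mul_Gf_eq_sum_mul_Gf_lamMinus μ Ka hμ hKa hlam'
    (summable_of_le μ Ka (fun k => (hμ k).le) hlam' hle hG)
  rw [← Finset.add_sum_erase _ _ (Finset.mem_univ i)] at hall
  rw [Finset.sum_update_of_mem (Finset.mem_univ i), zero_add,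
    Finset.sdiff_singleton_eq_erase] at hidle
  simp only [lamMinus_update_zero] at hidle
  have hGpos : 0 < Gf μ Ka lam := one_pos.trans_le (one_le_Gf μ Ka (fun k => (hμ k).le) hlam hG)
  have hstable : 0 < (∑ k, μ k) - (lam i + ∑ j ∈ Finset.univ.erase i, lam j) :=
    pos_of_mul_pos_left (hall ▸ sum_mul_Gf_lamMinus_pos μ Ka hμ hlam hG) hGpos.le
  have hpos : 0 < (∑ k, μ k) - ∑ j ∈ Finset.univ.erase i, lam j := by linarith [hlam i]
  refine ⟨hpos, ?_⟩
  rw [tsum_subtype_eq_Gf_update]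
  simp only [div_inv_eq_mul, ← hall, ← hidle]
  field_simp
  ring

/-- If `G(λ) < ∞`, the stationary probability `ψ_i` that class `i` is
idle satisfies `ψ_i = (1 − ρ_i) (∑_k μ_k/ψ_{|−k,i}) / (∑_k μ_k/ψ_{|−k})`, with
`ρ_i = λ_i / (M(K) − Λ(I∖{i}))`; in particular `M(K) − Λ(I∖{i}) > 0`. -/
theorem class_idle_probability
    {I K : Type} [Fintype I] [DecidableEq I] [Nonempty I]
    [Fintype K] [DecidableEq K] [Nonempty K]
    (μ : K → ℝ) (hμ : ∀ k, 0 < μ k)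
    (Ka : I → Finset K) (hKa : ∀ i, (Ka i).Nonempty) (hcov : ∀ k, ∃ i, k ∈ Ka i)
    (lam : I → ℝ) (hlam : ∀ i, 0 ≤ lam i) (i : I)
    (hG : Summable (fun x : I → ℕ => Phi μ Ka x * ∏ j, lam j ^ x j)) :
    0 < (∑ k, μ k) - ∑ j ∈ Finset.univ.erase i, lam j ∧
    (Gf μ Ka lam)⁻¹ *
        (∑' x : {x : I → ℕ // x i = 0}, Phi μ Ka x.1 * ∏ j, lam j ^ x.1 j) =
      (1 - lam i / ((∑ k, μ k) - ∑ j ∈ Finset.univ.erase i, lam j)) *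
        (∑ k, μ k / (Gf μ Ka (lamMinusKI Ka lam k i))⁻¹) /
        (∑ k, μ k / (Gf μ Ka (lamMinus Ka lam k))⁻¹) :=
  class_idle_probability_general μ hμ Ka hKa lam hlam i hG
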